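/- Let V be a Z/2-graded vector space with nondegenerate even graded-symmetric inner product, and let φ ∈ Hom(V^{⊗k},V), ψ ∈ Hom(V^{⊗l},V) both be cyclic with respect to the inner product. Then the Gerstenhaber bracket [φ,ψ] ∈ Hom(V^{⊗(k+l-1)},V) (the commutator of the corresponding coderivations of T(V)) is also cyclic. -/

import Mathlib

/-!
Cyclicity is checked summand by summand. Write `n = K + L - 1`. Rotating the arguments moves the
`i`-th summand of `φ ∘ ψ_{LK}` on `(v₀, …, v_{n-1})`, paired with `vₙ`, to the `(i-1)`-th summand
of `φ ∘ ψ_{LK}` on `(v₁, …, vₙ)`, paired with `v₀`: this is one application of the cyclicity of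
`φ`. The summand with `ψ` in the first slot of `φ` is left over; rotating it by cyclicity of `φ`
and then of `ψ` turns it into the summand of `ψ ∘ φ_{KL}` with `φ` in the last slot of `ψ`, and
symmetrically. The bracket's sign `(-1)^{⟨φ,ψ⟩}` is exactly what makes these exchanged boundary
terms match.
-/

/-- `(-1)^a` for `a : ZMod 2`. -/
def pSign (k : Type*) [CommRing k] (a : ZMod 2) : k := (-1 : k) ^ a.val

/-- The composition `φ ∘ ψ_{LK}` of `φ : V^{⊗K} → V` with the restriction of the
coderivation extension of `ψ : V^{⊗L} → V` (of parity `pψ`) to `V^{⊗(K+L-1)}`,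
with `ZMod 2 × ℤ`-graded signs `(-1)^{(|v₁|+⋯+|v_i|)|ψ| + i(L-1)}`; `p` records the
parities of the homogeneous arguments `v`. -/
def insertComp (k : Type*) [Field k] {V : Type*} [AddCommGroup V] [Module k V]
    (K L : ℕ) (hK : 1 ≤ K) (hL : 1 ≤ L)
    (φ : (Fin K → V) → V) (ψ : (Fin L → V) → V) (pψ : ZMod 2)
    (p : Fin (K + L - 1) → ZMod 2) (v : Fin (K + L - 1) → V) : V :=
  ∑ i : Fin K,
    pSign k ((∑ j : Fin (K + L - 1), if (j : ℕ) < (i : ℕ) then p j else 0) * pψ +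
        (((i : ℕ) * (L - 1) : ℕ) : ZMod 2)) •
      φ (fun j : Fin K =>
        if h1 : (j : ℕ) < (i : ℕ) then
          v ⟨(j : ℕ), by have := j.2; have := i.2; omega⟩
        else if h2 : (j : ℕ) = (i : ℕ) then
          ψ (fun t : Fin L => v ⟨(i : ℕ) + (t : ℕ), by have := t.2; have := i.2; omega⟩)
        else v ⟨(j : ℕ) + L - 1, by have := j.2; omega⟩)

/-- The Gerstenhaber bracket `[φ,ψ] = φ∘ψ_{LK} - (-1)^{⟨φ,ψ⟩} ψ∘φ_{KL}` of
`φ : V^{⊗K} → V` and `ψ : V^{⊗L} → V`, on homogeneous arguments of parities `p`,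
with the `ZMod 2 × ℤ`-graded sign `⟨φ,ψ⟩ = |φ||ψ| + (K-1)(L-1)`. -/
def gerstBracket (k : Type*) [Field k] {V : Type*} [AddCommGroup V] [Module k V]
    (K L : ℕ) (hK : 1 ≤ K) (hL : 1 ≤ L)
    (φ : (Fin K → V) → V) (ψ : (Fin L → V) → V) (pφ pψ : ZMod 2)
    (p : Fin (K + L - 1) → ZMod 2) (v : Fin (K + L - 1) → V) : V :=
  insertComp k K L hK hL φ ψ pψ p v
    - pSign k (pφ * pψ + (((K - 1) * (L - 1) : ℕ) : ZMod 2)) •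
      insertComp k L K hL hK ψ φ pφ
        (fun j => p ⟨(j : ℕ), by have := j.2; omega⟩)
        (fun j => v ⟨(j : ℕ), by have := j.2; omega⟩)

open Finset

section Sign

variable {k : Type*} [CommRing k]

lemma pSign_zero : pSign k 0 = 1 := by
  simp [pSign]

lemma pSign_add (a b : ZMod 2) : pSign k (a + b) = pSign k a * pSign k b := by
  rw [pSign, pSign, pSign, ZMod.val_add, ← neg_one_pow_eq_pow_mod_two, pow_add]

lemma pSign_add_one (a : ZMod 2) : pSign k (a + 1) = -pSign k a := by
  rw [pSign_add]
  simp [pSign, ZMod.val_one]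

lemma pSign_mul_self (a : ZMod 2) : pSign k a * pSign k a = 1 := by
  rw [← pSign_add, CharTwo.add_self_eq_zero, pSign_zero]

lemma pSign_gerstenhaber_boundary (a b : ℕ) (q₀ S pφ pψ : ZMod 2) :
    pSign k (pφ * pψ + ((a * b : ℕ) : ZMod 2)) *
        pSign k (((a + 1 : ℕ) : ZMod 2) + ((b + 1 : ℕ) : ZMod 2) + (q₀ + S + pψ) * pφ
          + q₀ * pψ)
      = -(pSign k (((a + b + 1 : ℕ) : ZMod 2) + q₀ * (pφ + pψ)) *
          pSign k (S * pφ + ((a * b : ℕ) : ZMod 2))) := by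
  rw [← pSign_add, ← pSign_add, ← pSign_add_one]
  congr 1
  push_cast
  linear_combination (pφ * pψ) * (CharTwo.two_eq_zero : (2 : ZMod 2) = 0)

end Sign

section Insertion

variable {α : Type*} {L : ℕ}

-- The compositions are evaluated on sequences `ℕ → V` rather than on `Fin n → V`, so that
-- dropping the first argument is just `fun m => u (m + 1)`; see `insertComp_eq_insertSum`.
def insertAt (f : (Fin L → α) → α) (i : ℕ) (u : ℕ → α) (j : ℕ) : α :=
  if j < i then u j else if j = i then f (fun t => u (i + t)) else u (j + L - 1)

variable (f : (Fin L → α) → α) (u : ℕ → α) {i j : ℕ}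

lemma insertAt_of_lt (h : j < i) : insertAt f i u j = u j := if_pos h

lemma insertAt_self : insertAt f i u i = f (fun t => u (i + t)) := by
  simp [insertAt]

lemma insertAt_of_gt (h : i < j) : insertAt f i u j = u (j + L - 1) := by
  simp [insertAt, h.not_gt, h.ne']

lemma insertAt_succ_succ :
    insertAt f (i + 1) u (j + 1) = insertAt f i (fun m => u (m + 1)) j := by
  rcases lt_trichotomy j i with h | rfl | h
  · rw [insertAt_of_lt _ _ (by omega), insertAt_of_lt _ _ h]
  · simp only [insertAt_self, add_right_comm]
  · rw [insertAt_of_gt _ _ (by omega), insertAt_of_gt _ _ h]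
    congr 1
    omega

end Insertion

def insertSign (k : Type*) [CommRing k] (L : ℕ) (pψ : ZMod 2) (q : ℕ → ZMod 2) (i : ℕ) : k :=
  pSign k ((∑ j ∈ range i, q j) * pψ + ((i * (L - 1) : ℕ) : ZMod 2))

section InsertSign

variable {k : Type*} [CommRing k] {L : ℕ} {pψ : ZMod 2} {q : ℕ → ZMod 2}

lemma insertSign_zero : insertSign k L pψ q 0 = 1 := by
  simp [insertSign, pSign_zero]

lemma insertSign_succ (i : ℕ) :
    insertSign k L pψ q (i + 1)
      = pSign k (q 0 * pψ + ((L - 1 : ℕ) : ZMod 2)) *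
          insertSign k L pψ (fun m => q (m + 1)) i := by
  rw [insertSign, insertSign, ← pSign_add, sum_range_succ']
  congr 1
  push_cast
  ring

end InsertSign

def insertSum (k : Type*) {V : Type*} [CommRing k] [AddCommGroup V] [Module k V] {K L : ℕ}
    (φ : (Fin K → V) → V) (ψ : (Fin L → V) → V) (pψ : ZMod 2) (q : ℕ → ZMod 2)
    (u : ℕ → V) : V :=
  ∑ i ∈ range K, insertSign k L pψ q i • φ (fun j => insertAt ψ i u j)

def bracketSum (k : Type*) {V : Type*} [CommRing k] [AddCommGroup V] [Module k V] {K L : ℕ}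
    (φ : (Fin K → V) → V) (ψ : (Fin L → V) → V) (pφ pψ : ZMod 2) (q : ℕ → ZMod 2)
    (u : ℕ → V) : V :=
  insertSum k φ ψ pψ q u
    - pSign k (pφ * pψ + (((K - 1) * (L - 1) : ℕ) : ZMod 2)) • insertSum k ψ φ pφ q u

section Graded

variable {k V : Type*} [CommRing k] [AddCommGroup V] [Module k V]
  (𝒱 : ZMod 2 → Submodule k V) (ip : V →ₗ[k] V →ₗ[k] k) {K L : ℕ}

def HasParity (φ : (Fin K → V) → V) (pφ : ZMod 2) : Prop :=
  ∀ (u : Fin K → V) (q : Fin K → ZMod 2), (∀ i, u i ∈ 𝒱 (q i)) → φ u ∈ 𝒱 ((∑ i, q i) + pφ)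

def IsCyclicWrt (φ : (Fin K → V) → V) (pφ : ZMod 2) : Prop :=
  ∀ (v : Fin (K + 1) → V) (p : Fin (K + 1) → ZMod 2), (∀ i, v i ∈ 𝒱 (p i)) →
    ip (φ (fun i : Fin K => v i.castSucc)) (v (Fin.last K))
      = pSign k ((K : ZMod 2) + p 0 * pφ) * ip (v 0) (φ (fun i : Fin K => v i.succ))

variable {𝒱 ip} {φ : (Fin K → V) → V} {ψ : (Fin L → V) → V} {pφ pψ : ZMod 2}
  {u : ℕ → V} {q : ℕ → ZMod 2}

lemma IsCyclicWrt.apply_seq (hφ : IsCyclicWrt 𝒱 ip φ pφ) (hu : ∀ m, u m ∈ 𝒱 (q m)) :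
    ip (φ fun j => u j) (u K)
      = pSign k ((K : ZMod 2) + q 0 * pφ) * ip (u 0) (φ fun j => u (j + 1)) := by
  simpa using hφ (fun i => u i) (fun i => q i) (fun i => hu i)

lemma HasParity.insertAt_mem (hψ : HasParity 𝒱 ψ pψ) (hu : ∀ m, u m ∈ 𝒱 (q m)) (i j : ℕ) :
    insertAt ψ i u j ∈ 𝒱 (insertAt (fun w : Fin L → ZMod 2 => (∑ t, w t) + pψ) i q j) := by
  unfold insertAt
  split_ifs
  · exact hu j
  · exact hψ _ _ fun t => hu _
  · exact hu _

lemma IsCyclicWrt.ip_insertAt_succ (hφ : IsCyclicWrt 𝒱 ip φ pφ) (hψ : HasParity 𝒱 ψ pψ)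
    (hu : ∀ m, u m ∈ 𝒱 (q m)) {i : ℕ} (hi : i + 1 < K) :
    ip (φ fun j => insertAt ψ (i + 1) u j) (u (K + L - 1))
      = pSign k ((K : ZMod 2) + q 0 * pφ) *
          ip (u 0) (φ fun j => insertAt ψ i (fun m => u (m + 1)) j) := by
  simpa only [insertAt_of_gt _ _ hi, insertAt_of_lt _ _ i.succ_pos, insertAt_succ_succ] using
    hφ.apply_seq (hψ.insertAt_mem hu (i + 1))

lemma IsCyclicWrt.ip_insertAt_zero (hφ : IsCyclicWrt 𝒱 ip φ pφ) (hφ' : HasParity 𝒱 φ pφ)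
    (hψ : IsCyclicWrt 𝒱 ip ψ pψ) (hψ' : HasParity 𝒱 ψ pψ) (hu : ∀ m, u m ∈ 𝒱 (q m))
    (hK : 1 ≤ K) (hL : 1 ≤ L) :
    ip (φ fun j => insertAt ψ 0 u j) (u (K + L - 1))
      = pSign k ((K + L : ZMod 2) + ((∑ t : Fin L, q t) + pψ) * pφ + q 0 * pψ) *
          ip (u 0) (ψ fun j => insertAt φ (L - 1) (fun m => u (m + 1)) j) := by
  obtain ⟨b, rfl⟩ : ∃ b, L = b + 1 := ⟨L - 1, by omega⟩
  have hφψ := hφ.apply_seq (hψ'.insertAt_mem hu 0)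
  have hψφ := hψ.apply_seq (hφ'.insertAt_mem hu (b + 1))
  have hlow : (fun j : Fin (b + 1) => insertAt φ (b + 1) u j) = fun j : Fin (b + 1) => u j :=
    funext fun j => insertAt_of_lt _ _ j.isLt
  simp only [insertAt_self, insertAt_of_gt _ _ hK, insertAt_of_gt _ _ (Nat.succ_pos _),
    zero_add] at hφψ
  simp only [hlow, insertAt_self, insertAt_of_lt _ _ (Nat.succ_pos _), insertAt_succ_succ] at hψφ
  have htail :
      (fun j : Fin K => u ((j : ℕ).succ + (b + 1) - 1)) = fun j : Fin K => u (b + 1 + j) :=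
    funext fun j => congrArg u (by omega)
  rw [hφψ, htail, hψφ, ← mul_assoc, ← pSign_add, Nat.add_sub_cancel]
  congr 2
  push_cast
  ring

lemma IsCyclicWrt.ip_insertSum (hφ : IsCyclicWrt 𝒱 ip φ pφ) (hψ : HasParity 𝒱 ψ pψ)
    (hu : ∀ m, u m ∈ 𝒱 (q m)) (hK : 1 ≤ K) (hL : 1 ≤ L) :
    ip (insertSum k φ ψ pψ q u) (u (K + L - 1))
      = ip (φ fun j => insertAt ψ 0 u j) (u (K + L - 1))
        + pSign k (((K + L - 1 : ℕ) : ZMod 2) + q 0 * (pφ + pψ)) *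
          (ip (u 0) (insertSum k φ ψ pψ (fun m => q (m + 1)) (fun m => u (m + 1)))
            - insertSign k L pψ (fun m => q (m + 1)) (K - 1) *
                ip (u 0) (φ fun j => insertAt ψ (K - 1) (fun m => u (m + 1)) j)) := by
  obtain ⟨a, rfl⟩ : ∃ a, K = a + 1 := ⟨K - 1, by omega⟩
  have hsign : pSign k (((a + 1 + L - 1 : ℕ) : ZMod 2) + q 0 * (pφ + pψ))
      = pSign k (q 0 * pψ + ((L - 1 : ℕ) : ZMod 2)) *
          pSign k (((a + 1 : ℕ) : ZMod 2) + q 0 * pφ) := by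
    rw [← pSign_add]
    congr 1
    rw [show a + 1 + L - 1 = (a + 1) + (L - 1) by omega]
    push_cast
    ring
  simp only [insertSum]
  rw [sum_range_succ' _ a, sum_range_succ _ a]
  simp only [map_add, map_sum, map_smul, LinearMap.add_apply, LinearMap.coe_sum,
    Finset.sum_apply, LinearMap.smul_apply, smul_eq_mul, insertSign_zero, one_mul,
    add_sub_cancel_right, Nat.add_sub_cancel, mul_sum]
  rw [add_comm]
  congr 1
  refine sum_congr rfl fun i hi => ?_
  rw [hφ.ip_insertAt_succ hψ hu (by simpa using hi), insertSign_succ, hsign]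
  ring

lemma IsCyclicWrt.ip_bracketSum (hφ : IsCyclicWrt 𝒱 ip φ pφ) (hφ' : HasParity 𝒱 φ pφ)
    (hψ : IsCyclicWrt 𝒱 ip ψ pψ) (hψ' : HasParity 𝒱 ψ pψ) (hu : ∀ m, u m ∈ 𝒱 (q m))
    (hK : 1 ≤ K) (hL : 1 ≤ L) :
    ip (bracketSum k φ ψ pφ pψ q u) (u (K + L - 1))
      = pSign k (((K + L - 1 : ℕ) : ZMod 2) + q 0 * (pφ + pψ)) *
          ip (u 0) (bracketSum k φ ψ pφ pψ (fun m => q (m + 1)) (fun m => u (m + 1))) := by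
  obtain ⟨a, rfl⟩ : ∃ a, K = a + 1 := ⟨K - 1, by omega⟩
  obtain ⟨b, rfl⟩ : ∃ b, L = b + 1 := ⟨L - 1, by omega⟩
  have hsum (N : ℕ) : ∑ t : Fin (N + 1), q t = q 0 + ∑ j ∈ range N, q (j + 1) := by
    rw [Fin.sum_univ_eq_sum_range (fun t => q t), sum_range_succ', add_comm]
  have hφψ := hφ.ip_insertSum hψ' hu hK hL
  have hψφ := hψ.ip_insertSum hφ' hu hL hK
  have hφψ₀ := hφ.ip_insertAt_zero hφ' hψ hψ' hu hK hL
  have hψφ₀ := hψ.ip_insertAt_zero hψ' hφ hφ' hu hL hK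
  rw [Nat.add_comm (b + 1)] at hψφ hψφ₀
  rw [add_comm pψ] at hψφ
  simp only [bracketSum, map_sub, map_smul, LinearMap.sub_apply, LinearMap.smul_apply,
    smul_eq_mul]
  rw [hφψ, hψφ, hφψ₀, hψφ₀]
  simp only [insertSign, hsum, Nat.add_sub_cancel, Nat.mul_comm b a]
  rw [show a + 1 + (b + 1) - 1 = a + b + 1 by omega]
  set D := ip (u 0) (ψ fun j => insertAt φ b (fun m => u (m + 1)) j)
  set B := ip (u 0) (φ fun j => insertAt ψ a (fun m => u (m + 1)) j)
  set ε := pSign k (pφ * pψ + ((a * b : ℕ) : ZMod 2))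
  have hD := pSign_gerstenhaber_boundary (k := k) a b (q 0) (∑ j ∈ range b, q (j + 1)) pφ pψ
  have hB := pSign_gerstenhaber_boundary (k := k) b a (q 0) (∑ j ∈ range a, q (j + 1)) pψ pφ
  rw [mul_comm pψ pφ, mul_comm b a, Nat.add_comm b a, add_comm pψ pφ] at hB
  set sA := pSign k (((a + 1 : ℕ) : ZMod 2) + ((b + 1 : ℕ) : ZMod 2)
    + (q 0 + ∑ j ∈ range b, q (j + 1) + pψ) * pφ + q 0 * pψ)
  linear_combination (ε * D) * hD - B * hB
    - (sA * D) * pSign_mul_self (k := k) (pφ * pψ + ((a * b : ℕ) : ZMod 2))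

end Graded

lemma sum_fin_ite_val_lt {M : Type*} [AddCommMonoid M] {n i : ℕ} (hi : i ≤ n) (f : ℕ → M) :
    (∑ j : Fin n, if (j : ℕ) < i then f j else 0) = ∑ j ∈ range i, f j := by
  rw [Fin.sum_univ_eq_sum_range (fun j => if j < i then f j else 0), ← sum_filter]
  congr 1
  ext j
  simp only [mem_filter, mem_range]
  omega

section Bracket

variable {k V : Type*} [Field k] [AddCommGroup V] [Module k V] {K L : ℕ}
  (hK : 1 ≤ K) (hL : 1 ≤ L) {φ : (Fin K → V) → V} {ψ : (Fin L → V) → V} {pφ pψ : ZMod 2}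
  {u : ℕ → V} {q : ℕ → ZMod 2}

lemma insertComp_eq_insertSum {p : Fin (K + L - 1) → ZMod 2} {v : Fin (K + L - 1) → V}
    (hp : ∀ j, p j = q j) (hv : ∀ j, v j = u j) :
    insertComp k K L hK hL φ ψ pψ p v = insertSum k φ ψ pψ q u := by
  rw [insertComp, insertSum, ← Fin.sum_univ_eq_sum_range]
  refine Fintype.sum_congr _ _ fun i => ?_
  simp only [hp, hv, sum_fin_ite_val_lt (by omega : (i : ℕ) ≤ K + L - 1), insertSign,
    insertAt]
  rfl

lemma gerstBracket_eq_bracketSum {p : Fin (K + L - 1) → ZMod 2} {v : Fin (K + L - 1) → V}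
    (hp : ∀ j, p j = q j) (hv : ∀ j, v j = u j) :
    gerstBracket k K L hK hL φ ψ pφ pψ p v = bracketSum k φ ψ pφ pψ q u := by
  rw [gerstBracket, bracketSum, insertComp_eq_insertSum hK hL hp hv,
    insertComp_eq_insertSum hL hK (fun j => hp _) (fun j => hv _)]

end Bracket

lemma extend_val_mem {k V : Type*} [CommRing k] [AddCommGroup V] [Module k V]
    {𝒱 : ZMod 2 → Submodule k V} {n : ℕ} {v : Fin n → V} {p : Fin n → ZMod 2}
    (hv : ∀ i, v i ∈ 𝒱 (p i)) (m : ℕ) :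
    Function.extend Fin.val v 0 m ∈ 𝒱 (Function.extend Fin.val p 0 m) := by
  by_cases h : ∃ i : Fin n, (i : ℕ) = m
  · obtain ⟨i, rfl⟩ := h
    simpa only [Fin.val_injective.extend_apply] using hv i
  · simpa only [Function.extend_apply' _ _ _ h, Pi.zero_apply] using (𝒱 0).zero_mem

theorem gerstenhaber_bracket_of_cyclic_is_cyclic_general {k V : Type*} [Field k]
    [AddCommGroup V] [Module k V]
    (𝒱 : ZMod 2 → Submodule k V)
    (ip : V →ₗ[k] V →ₗ[k] k)
    (K L : ℕ) (hK : 1 ≤ K) (hL : 1 ≤ L)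
    (φ : (Fin K → V) → V) (ψ : (Fin L → V) → V) (pφ pψ : ZMod 2)
    (hφ : ∀ (u : Fin K → V) (q : Fin K → ZMod 2), (∀ i, u i ∈ 𝒱 (q i)) →
      φ u ∈ 𝒱 ((∑ i, q i) + pφ))
    (hψ : ∀ (u : Fin L → V) (q : Fin L → ZMod 2), (∀ i, u i ∈ 𝒱 (q i)) →
      ψ u ∈ 𝒱 ((∑ i, q i) + pψ))
    (hφcyc : ∀ (v : Fin (K + 1) → V) (p : Fin (K + 1) → ZMod 2),
      (∀ i, v i ∈ 𝒱 (p i)) →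
      ip (φ (fun i : Fin K => v i.castSucc)) (v (Fin.last K))
        = pSign k ((K : ZMod 2) + p 0 * pφ) *
            ip (v 0) (φ (fun i : Fin K => v i.succ)))
    (hψcyc : ∀ (v : Fin (L + 1) → V) (p : Fin (L + 1) → ZMod 2),
      (∀ i, v i ∈ 𝒱 (p i)) →
      ip (ψ (fun i : Fin L => v i.castSucc)) (v (Fin.last L))
        = pSign k ((L : ZMod 2) + p 0 * pψ) *
            ip (v 0) (ψ (fun i : Fin L => v i.succ))) :
    ∀ (v : Fin (K + L - 1 + 1) → V) (p : Fin (K + L - 1 + 1) → ZMod 2),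
      (∀ i, v i ∈ 𝒱 (p i)) →
      ip (gerstBracket k K L hK hL φ ψ pφ pψ
            (fun i : Fin (K + L - 1) => p i.castSucc)
            (fun i : Fin (K + L - 1) => v i.castSucc))
          (v (Fin.last (K + L - 1)))
        = pSign k (((K + L - 1 : ℕ) : ZMod 2) + p 0 * (pφ + pψ)) *
            ip (v 0)
              (gerstBracket k K L hK hL φ ψ pφ pψ
                (fun i : Fin (K + L - 1) => p i.succ)
                (fun i : Fin (K + L - 1) => v i.succ)) := by
  intro v p hv
  set u := Function.extend Fin.val v 0
  set q := Function.extend Fin.val p 0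
  have hu (i : Fin (K + L - 1 + 1)) : v i = u i := (Fin.val_injective.extend_apply v 0 i).symm
  have hq (i : Fin (K + L - 1 + 1)) : p i = q i := (Fin.val_injective.extend_apply p 0 i).symm
  rw [gerstBracket_eq_bracketSum hK hL (fun j => hq j.castSucc) (fun j => hu j.castSucc),
    gerstBracket_eq_bracketSum hK hL (q := fun m => q (m + 1)) (u := fun m => u (m + 1))
      (fun j => hq j.succ) (fun j => hu j.succ), hu, hu, hq]
  exact IsCyclicWrt.ip_bracketSum hφcyc hφ hψcyc hψ (extend_val_mem hv) hK hL

/-- Lemma 4: if `φ` and `ψ` are cyclic with respect to a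
nondegenerate even graded-symmetric inner product, then so is their Gerstenhaber
bracket `[φ,ψ]` (which has parity `|φ| + |ψ|`). -/
theorem gerstenhaber_bracket_of_cyclic_is_cyclic {k V : Type*} [Field k]
    [AddCommGroup V] [Module k V]
    (𝒱 : ZMod 2 → Submodule k V)
    (ip : V →ₗ[k] V →ₗ[k] k)
    (hsymm : ∀ i j : ZMod 2, ∀ v ∈ 𝒱 i, ∀ w ∈ 𝒱 j, ip v w = pSign k (i * j) * ip w v)
    (heven : ∀ i j : ZMod 2, i ≠ j → ∀ v ∈ 𝒱 i, ∀ w ∈ 𝒱 j, ip v w = 0)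
    (hnd : ∀ v : V, (∀ w : V, ip v w = 0) → v = 0)
    (K L : ℕ) (hK : 1 ≤ K) (hL : 1 ≤ L)
    (φ : (Fin K → V) → V) (ψ : (Fin L → V) → V) (pφ pψ : ZMod 2)
    (hφ : ∀ (u : Fin K → V) (q : Fin K → ZMod 2), (∀ i, u i ∈ 𝒱 (q i)) →
      φ u ∈ 𝒱 ((∑ i, q i) + pφ))
    (hψ : ∀ (u : Fin L → V) (q : Fin L → ZMod 2), (∀ i, u i ∈ 𝒱 (q i)) →
      ψ u ∈ 𝒱 ((∑ i, q i) + pψ))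
    (hφcyc : ∀ (v : Fin (K + 1) → V) (p : Fin (K + 1) → ZMod 2),
      (∀ i, v i ∈ 𝒱 (p i)) →
      ip (φ (fun i : Fin K => v i.castSucc)) (v (Fin.last K))
        = pSign k ((K : ZMod 2) + p 0 * pφ) *
            ip (v 0) (φ (fun i : Fin K => v i.succ)))
    (hψcyc : ∀ (v : Fin (L + 1) → V) (p : Fin (L + 1) → ZMod 2),
      (∀ i, v i ∈ 𝒱 (p i)) →
      ip (ψ (fun i : Fin L => v i.castSucc)) (v (Fin.last L))
        = pSign k ((L : ZMod 2) + p 0 * pψ) *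
            ip (v 0) (ψ (fun i : Fin L => v i.succ))) :
    ∀ (v : Fin (K + L - 1 + 1) → V) (p : Fin (K + L - 1 + 1) → ZMod 2),
      (∀ i, v i ∈ 𝒱 (p i)) →
      ip (gerstBracket k K L hK hL φ ψ pφ pψ
            (fun i : Fin (K + L - 1) => p i.castSucc)
            (fun i : Fin (K + L - 1) => v i.castSucc))
          (v (Fin.last (K + L - 1)))
        = pSign k (((K + L - 1 : ℕ) : ZMod 2) + p 0 * (pφ + pψ)) *
            ip (v 0)
              (gerstBracket k K L hK hL φ ψ pφ pψ
                (fun i : Fin (K + L - 1) => p i.succ)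
                (fun i : Fin (K + L - 1) => v i.succ)) :=
  gerstenhaber_bracket_of_cyclic_is_cyclic_general 𝒱 ip K L hK hL φ ψ pφ pψ hφ hψ hφcyc hψcyc
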